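/- arXiv:1003.5677 — 2 statements merged into one kernel-verified Lean document; each statement's English description precedes it below -/
import Mathlib

section
/- Let k be a field, G an ordered abelian group, M the valuation ideal of the power series field k((G)) with canonical valuation, and f(X) = Σ_{i≥1} c_i X^i ∈ k[[X]] a power series with c_1 ≠ 0. Then the induced map f : M → M is a bijection, and indeed an isomorphism of ultrametric spaces (pseudo-linear with pseudo-slope c_1). -/
/-!
For `y, z` in the valuation ideal and `n ≠ 1`, the geometric-sum factorisation gives
`v (yⁿ - zⁿ) > v (y - z)`; summing over the terms of `f`, everything but the linear term is
smaller than `v (y - z)`, so `f` is pseudo-linear with slope `c₁`, hence an isometry and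
injective. For surjectivity onto `w`, the map `T y = y + c₁⁻¹ (w - f y)` is then strictly
contracting on the valuation ideal, and such a map has a fixed point because Hahn series are
spherically complete: a Zorn-minimal ball among the balls of centre `y` and radius
`v (T y - y)` must be centred at a fixed point.
-/

namespace AddValuation

variable {R Γ : Type*} [CommRing R] [AddCancelCommMonoid Γ] [LinearOrder Γ]
  [IsOrderedCancelAddMonoid Γ] (v : AddValuation R (WithTop Γ)) {y z : R}

lemma map_sub_lt_map_pow_sub_pow (hy : 0 < v y) (hz : 0 < v z) (hyz : v (y - z) ≠ ⊤) {n : ℕ}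
    (hn : n ≠ 1) : v (y - z) < v (y ^ n - z ^ n) := by
  obtain _ | _ | n := n
  · simpa [lt_top_iff_ne_top] using hyz
  · exact absurd rfl hn
  have hterm : ∀ a b : ℕ, a + b ≠ 0 → 0 < v (y ^ a * z ^ b) := by
    intro a b hab
    rw [v.map_mul, v.map_pow, v.map_pow]
    rcases Nat.eq_zero_or_pos a with rfl | ha
    · simpa using nsmul_pos hz hab
    · exact add_pos_of_pos_of_nonneg (nsmul_pos hy ha.ne') (nsmul_nonneg hz.le b)
  have hsum : 0 < v (∑ j ∈ Finset.range (n + 2), y ^ j * z ^ (n + 2 - 1 - j)) :=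
    v.map_lt_sum WithTop.coe_ne_top fun j hj => hterm _ _ (by omega)
  rw [← geom_sum₂_mul, v.map_mul]
  simpa using WithTop.add_lt_add_right hyz hsum

end AddValuation

namespace HahnSeries

variable {Γ R : Type*} [LinearOrder Γ]

lemma SummableFamily.lt_orderTop_hsum [AddCommMonoid R] {α : Type*}
    {s : SummableFamily Γ R α} {g : Γ} (h : ∀ a, g < (s a).orderTop) :
    g < s.hsum.orderTop := by
  by_contra! hle
  obtain ⟨j, hj⟩ := WithTop.ne_top_iff_exists.mp (hle.trans_lt (WithTop.coe_lt_top g)).ne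
  refine coeff_orderTop_ne hj.symm ?_
  rw [coeff_hsum]
  exact finsum_eq_zero_of_forall_eq_zero fun a =>
    coeff_eq_zero_of_lt_orderTop ((hj ▸ hle).trans_lt (h a))

section ClosedBall

variable [AddGroup R]

def closedBall (x : R⟦Γ⟧) (r : WithTop Γ) : Set R⟦Γ⟧ := {y | r ≤ (y - x).orderTop}

@[simp]
lemma mem_closedBall {x y : R⟦Γ⟧} {r : WithTop Γ} : y ∈ closedBall x r ↔ r ≤ (y - x).orderTop :=
  Iff.rfl

lemma self_mem_closedBall (x : R⟦Γ⟧) (r : WithTop Γ) : x ∈ closedBall x r := by simp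

lemma mem_closedBall_comm {x y : R⟦Γ⟧} {r : WithTop Γ} :
    y ∈ closedBall x r ↔ x ∈ closedBall y r := by
  rw [mem_closedBall, mem_closedBall, ← orderTop_neg, neg_sub]

lemma closedBall_subset_closedBall_of_mem {x y : R⟦Γ⟧} {r s : WithTop Γ}
    (hy : y ∈ closedBall x r) (hrs : r ≤ s) : closedBall y s ⊆ closedBall x r := fun w hw => by
  rw [mem_closedBall, ← sub_add_sub_cancel w y x]
  exact (le_min (hrs.trans hw) hy).trans min_orderTop_le_orderTop_add

lemma coeff_eq_of_mem_closedBall {x y : R⟦Γ⟧} {r : WithTop Γ} (hy : y ∈ closedBall x r) {g : Γ}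
    (hg : g < r) : y.coeff g = x.coeff g := by
  have := coeff_eq_zero_of_lt_orderTop (hg.trans_le hy)
  rwa [coeff_sub, sub_eq_zero] at this

theorem exists_forall_mem_closedBall_of_isChain {C : Set R⟦Γ⟧} (r : R⟦Γ⟧ → WithTop Γ)
    (hC : IsChain (· ⊆ ·) ((fun x => closedBall x (r x)) '' C)) :
    ∃ b, ∀ x ∈ C, b ∈ closedBall x (r x) := by
  classical
  have hagree : ∀ x ∈ C, ∀ x' ∈ C, ∀ g : Γ, g < r x → g < r x' → x.coeff g = x'.coeff g := by
    intro x hx x' hx' g hg hg'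
    rcases hC.total (Set.mem_image_of_mem _ hx) (Set.mem_image_of_mem _ hx') with h | h
    · exact coeff_eq_of_mem_closedBall (h (self_mem_closedBall x _)) hg'
    · exact (coeff_eq_of_mem_closedBall (h (self_mem_closedBall x' _)) hg).symm
  let c : Γ → R := fun g => if h : ∃ x ∈ C, g < r x then h.choose.coeff g else 0
  have hc : ∀ x ∈ C, ∀ g : Γ, g < r x → c g = x.coeff g := by
    intro x hx g hg
    have h : ∃ x ∈ C, g < r x := ⟨x, hx, hg⟩
    simp only [c, dif_pos h]
    exact hagree _ h.choose_spec.1 x hx g h.choose_spec.2 hg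
  have hwf : (Function.support c).IsWF := by
    rw [Set.isWF_iff_no_descending_seq]
    intro φ hφ hmem
    obtain ⟨x, hx, h0⟩ : ∃ x ∈ C, φ 0 < r x := by
      by_contra h
      exact hmem 0 (dif_neg h)
    refine Set.isWF_iff_no_descending_seq.mp x.isWF_support φ hφ fun n => ?_
    have hn : (φ n : WithTop Γ) < r x :=
      (WithTop.coe_le_coe.mpr (hφ.antitone (Nat.zero_le n))).trans_lt h0
    rw [mem_support, ← hc x hx _ hn]
    exact hmem n
  refine ⟨⟨c, hwf.isPWO⟩, fun x hx => le_orderTop_iff_forall.mpr fun g hg => ?_⟩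
  rw [coeff_sub, sub_eq_zero]
  exact hc x hx g hg

theorem exists_isFixedPt_of_contracting [Zero Γ] {T : R⟦Γ⟧ → R⟦Γ⟧}
    (hT : Set.MapsTo T {x | 0 < x.orderTop} {x | 0 < x.orderTop})
    (hcontr : ∀ y, 0 < y.orderTop → ∀ z, 0 < z.orderTop → y ≠ z →
      (y - z).orderTop < (T y - T z).orderTop) :
    ∃ y, 0 < y.orderTop ∧ Function.IsFixedPt T y := by
  set M := {x : R⟦Γ⟧ | 0 < x.orderTop}
  let B : R⟦Γ⟧ → Set R⟦Γ⟧ := fun y => closedBall y (T y - y).orderTop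
  have hB_M : ∀ y ∈ M, B y ⊆ M := fun y hy z hz => by
    have hρ : 0 < (T y - y).orderTop := (lt_min (hT hy) hy).trans_le min_orderTop_le_orderTop_sub
    show 0 < z.orderTop
    rw [← sub_add_cancel z y]
    exact (lt_min (hρ.trans_le hz) hy).trans_le min_orderTop_le_orderTop_add
  have hB_mono : ∀ y ∈ M, ∀ z ∈ B y, B z ⊆ B y := by
    intro y hy z hz
    refine closedBall_subset_closedBall_of_mem hz ?_
    have hTzy : (T y - y).orderTop ≤ (T z - T y).orderTop := by
      rcases eq_or_ne z y with rfl | hne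
      · simp
      · exact (hz.trans_lt (hcontr z (hB_M y hy hz) y hy hne)).le
    rw [← sub_add_sub_cancel (T z) (T y) z, ← sub_add_sub_cancel (T y) y z]
    exact (le_min hTzy ((le_min le_rfl (mem_closedBall_comm.mp hz)).trans
      min_orderTop_le_orderTop_add)).trans min_orderTop_le_orderTop_add
  have hchain : ∀ c ⊆ B '' M, IsChain (· ⊆ ·) c → c.Nonempty →
      ∃ lb ∈ B '' M, ∀ s ∈ c, lb ⊆ s := by
    rintro c hcM hc ⟨_, hs⟩
    obtain ⟨b, hb⟩ := exists_forall_mem_closedBall_of_isChain (C := M ∩ B ⁻¹' c)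
      (fun y => (T y - y).orderTop) (hc.mono (by rintro _ ⟨y, hy, rfl⟩; exact hy.2))
    obtain ⟨y, hy, rfl⟩ := hcM hs
    refine ⟨B b, ⟨b, hB_M y hy (hb y ⟨hy, hs⟩), rfl⟩, fun s hs => ?_⟩
    obtain ⟨y, hy, rfl⟩ := hcM hs
    exact hB_mono y hy b (hb y ⟨hy, hs⟩)
  obtain ⟨_, -, hmin⟩ := zorn_superset_nonempty (B '' M) hchain (B 0) ⟨0, by simp [M], rfl⟩
  obtain ⟨y, hy, rfl⟩ := hmin.prop
  refine ⟨y, hy, by_contra fun hne => ?_⟩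
  have hTy : T y ∈ B y := by simp [B]
  have hy_mem : y ∈ B (T y) :=
    hmin.le_of_le ⟨T y, hT hy, rfl⟩ (hB_mono y hy _ hTy) (self_mem_closedBall y _)
  exact ((hcontr (T y) (hT hy) y hy hne).trans_le hy_mem).ne (by rw [← orderTop_neg, neg_sub])

end ClosedBall

end HahnSeries

namespace PowerSeries

open HahnSeries SummableFamily

variable {Γ : Type*} [AddCancelCommMonoid Γ] [LinearOrder Γ] [IsOrderedCancelAddMonoid Γ]

section CommRing

variable {R : Type*} [CommRing R] {f : PowerSeries R} {y z : R⟦Γ⟧}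

lemma orderTop_heval_pos (hf : coeff 0 f = 0) (hy : 0 < y.orderTop) :
    0 < (heval y f).orderTop := by
  refine lt_orderTop_hsum fun n => ?_
  rw [powerSeriesFamily_of_orderTop_pos hy]
  rcases eq_or_ne n 0 with rfl | hn
  · simp [hf]
  · exact (orderTop_nsmul_le_orderTop_pow.trans_lt' (nsmul_pos hy hn)).trans_le
      (orderTop_le_orderTop_smul _ _)

lemma orderTop_sub_lt_orderTop_heval_sub_heval_sub [IsDomain R] (hy : 0 < y.orderTop)
    (hz : 0 < z.orderTop) (hyz : y ≠ z) :
    (y - z).orderTop < (heval y f - heval z f - HahnSeries.C (coeff 1 f) * (y - z)).orderTop := by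
  classical
  obtain ⟨d, hd⟩ := WithTop.ne_top_iff_exists.mp (orderTop_ne_top.mpr (sub_ne_zero.mpr hyz))
  have hpow : ∀ n, n ≠ 1 → (y - z).orderTop < (y ^ n - z ^ n).orderTop := by
    intro n hn
    simpa only [addVal_apply] using (addVal Γ R).map_sub_lt_map_pow_sub_pow
      (by rwa [addVal_apply]) (by rwa [addVal_apply])
      (by rw [addVal_apply, ← hd]; exact WithTop.coe_ne_top) hn
  have hsum : heval y f - heval z f - HahnSeries.C (coeff 1 f) * (y - z) =
      (powerSeriesFamily y f - powerSeriesFamily z f -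
        SummableFamily.single 1 (HahnSeries.C (coeff 1 f) * (y - z))).hsum := by
    simp only [hsum_sub, hsum_single, heval_apply]
  rw [hsum, ← hd]
  refine lt_orderTop_hsum fun n => ?_
  simp only [SummableFamily.sub_apply, powerSeriesFamily_of_orderTop_pos hy,
    powerSeriesFamily_of_orderTop_pos hz, single_toFun, ← smul_sub]
  rcases eq_or_ne n 1 with rfl | hn
  · simp
  · rw [Pi.single_eq_of_ne hn, sub_zero, hd]
    exact (hpow n hn).trans_le (orderTop_le_orderTop_smul _ _)

lemma orderTop_heval_sub_heval [IsDomain R] (hf : coeff 1 f ≠ 0) (hy : 0 < y.orderTop)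
    (hz : 0 < z.orderTop) (hyz : y ≠ z) :
    (heval y f - heval z f).orderTop = (y - z).orderTop := by
  have hlin : (HahnSeries.C (coeff 1 f) * (y - z)).orderTop = (y - z).orderTop := by
    rw [orderTop_mul, HahnSeries.C_apply, orderTop_single hf, WithTop.coe_zero, zero_add]
  have hlt := orderTop_sub_lt_orderTop_heval_sub_heval_sub (f := f) hy hz hyz
  rw [← hlin] at hlt
  rw [← sub_add_cancel (heval y f - heval z f) (HahnSeries.C (coeff 1 f) * (y - z)),
    orderTop_add_eq_right hlt, hlin]

end CommRing

section Field

variable {K : Type*} [Field K] {f : PowerSeries K}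

theorem surjOn_heval (hf0 : coeff 0 f = 0) (hf1 : coeff 1 f ≠ 0) :
    Set.SurjOn (heval · f) {y : K⟦Γ⟧ | 0 < y.orderTop} {y | 0 < y.orderTop} := by
  intro w hw
  set u : K⟦Γ⟧ := HahnSeries.C (coeff 1 f)⁻¹
  have hu : u * HahnSeries.C (coeff 1 f) = 1 := by
    rw [← map_mul, inv_mul_cancel₀ hf1, map_one]
  have hu_orderTop : ∀ x, (u * x).orderTop = x.orderTop := fun x => by
    rw [orderTop_mul, show u.orderTop = 0 by simp [u, hf1], zero_add]
  have hT_maps : Set.MapsTo (fun y => y + u * (w - heval y f)) {y : K⟦Γ⟧ | 0 < y.orderTop}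
      {y | 0 < y.orderTop} := fun y hy => by
    have hv : 0 < (u * (w - heval y f)).orderTop := by
      rw [hu_orderTop]
      exact (lt_min hw (orderTop_heval_pos hf0 hy)).trans_le min_orderTop_le_orderTop_sub
    exact (lt_min hy hv).trans_le min_orderTop_le_orderTop_add
  obtain ⟨y, hy, hfix⟩ := exists_isFixedPt_of_contracting hT_maps fun y hy z hz hyz => by
    have hdiff : y + u * (w - heval y f) - (z + u * (w - heval z f)) =
        -(u * (heval y f - heval z f - HahnSeries.C (coeff 1 f) * (y - z))) := by
      linear_combination (-(y - z)) * hu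
    rw [hdiff, orderTop_neg, hu_orderTop]
    exact orderTop_sub_lt_orderTop_heval_sub_heval_sub hy hz hyz
  refine ⟨y, hy, ?_⟩
  have hzero : u * (w - heval y f) = 0 := add_eq_left.mp hfix
  rwa [mul_eq_zero, or_iff_right (HahnSeries.C_ne_zero (inv_ne_zero hf1)), sub_eq_zero,
    eq_comm] at hzero

theorem bijOn_heval (hf0 : coeff 0 f = 0) (hf1 : coeff 1 f ≠ 0) :
    Set.BijOn (heval · f) {y : K⟦Γ⟧ | 0 < y.orderTop} {y | 0 < y.orderTop} := by
  refine ⟨fun y hy => orderTop_heval_pos hf0 hy, fun y hy z hz hyz => ?_, surjOn_heval hf0 hf1⟩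
  by_contra hne
  have h := orderTop_heval_sub_heval hf1 hy hz hne
  rw [show heval y f = heval z f from hyz, sub_self, orderTop_zero, eq_comm, orderTop_eq_top,
    sub_eq_zero] at h
  exact hne h

end Field

end PowerSeries

/-- for a power series `f = Σ_{i≥1} c_i Xⁱ` over `k` with `c₁ ≠ 0`, the
induced map `F` on the valuation ideal `M` of the power series (Hahn series) field
`k((G))` (characterized coefficientwise: `(F y).coeff g = Σᶠ_i c_i · (yⁱ).coeff g`) is a
bijection of `M` onto itself, and indeed pseudo-linear with pseudo-slope `c₁` (hence an
isomorphism of ultrametric spaces). -/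
theorem powerSeries_map_bijective {k : Type*} [Field k] {G : Type*}
    [AddCommGroup G] [LinearOrder G] [IsOrderedAddMonoid G]
    (f : PowerSeries k)
    (h0 : PowerSeries.coeff 0 f = 0) (h1 : PowerSeries.coeff 1 f ≠ 0)
    (F : HahnSeries G k → HahnSeries G k)
    (hF : ∀ y : HahnSeries G k, 0 < (HahnSeries.addVal G k) y → ∀ g : G,
      (F y).coeff g = ∑ᶠ i : ℕ, PowerSeries.coeff i f * (y ^ i).coeff g) :
    Set.BijOn F {y : HahnSeries G k | 0 < (HahnSeries.addVal G k) y}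
      {y : HahnSeries G k | 0 < (HahnSeries.addVal G k) y} ∧
    ∀ y ∈ {y : HahnSeries G k | 0 < (HahnSeries.addVal G k) y},
      ∀ z ∈ {y : HahnSeries G k | 0 < (HahnSeries.addVal G k) y}, y ≠ z →
        (HahnSeries.addVal G k) (F y - F z) = (HahnSeries.addVal G k) (y - z) ∧
        (HahnSeries.addVal G k) (y - z) <
          (HahnSeries.addVal G k)
            (F y - F z - HahnSeries.C (PowerSeries.coeff 1 f) * (y - z)) := by
  have hF_eq : Set.EqOn (PowerSeries.heval · f) F {y | 0 < y.orderTop} := fun y hy => by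
    ext g
    change (PowerSeries.heval y f).coeff g = _
    rw [hF y (by rwa [HahnSeries.addVal_apply]) g, PowerSeries.heval_apply,
      HahnSeries.SummableFamily.coeff_hsum]
    simp [HahnSeries.SummableFamily.powerSeriesFamily_of_orderTop_pos hy]
  simp only [HahnSeries.addVal_apply]
  refine ⟨(PowerSeries.bijOn_heval h0 h1).congr hF_eq, fun y hy z hz hyz => ?_⟩
  rw [← hF_eq hy, ← hF_eq hz]
  exact ⟨PowerSeries.orderTop_heval_sub_heval h1 hy hz hyz,
    PowerSeries.orderTop_sub_lt_orderTop_heval_sub_heval_sub hy hz hyz⟩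
end

section
/- Let A_1,…,A_n be spherically complete subgroups of a valued abelian group (𝒜,v). If the sum A_1 + … + A_n is pseudo-direct, then it is spherically complete and has the optimal approximation property. Moreover, the sum is pseudo-direct if and only if the addition homomorphism f : A_1 × … × A_n → A_1 + … + A_n, (a_1,…,a_n) ↦ a_1+…+a_n (with minimum valuation on the product), is immediate. -/
/-
The product of the `Aᵢ` with the minimum valuation is spherically complete, because a ball of a
finite product is the box of its coordinate projections. The addition map `f` from the product
onto the sum is non-expanding, and pseudo-directness says that any approximation `f a` of a point
`z` of the sum can be strictly improved by moving `a` by no more than `v (z - f a)`. Given a nest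
of balls in the sum with empty intersection, a Zorn argument on the product, comparing points `a`
through the ball around `a` whose radius is the distance from `f a` to the nest, produces a point
whose improvement contradicts maximality. The optimal approximation property follows by applying
spherical completeness to the nest of balls `{y | v (z - y₀) ≤ v (z - y)}`. Pseudo-directness and
(IH1), (IH2) have the same witnesses; for (IH2) ⇒ pseudo-direct one compares with the vector that
keeps only a coordinate of least valuation.
-/

section Ultrametric

variable {Y Y' : Type*} {Γ Γ' : Type*} [LinearOrder Γ] [OrderTop Γ]
  [LinearOrder Γ'] [OrderTop Γ']

/-- The axioms of an ultrametric space with distance values in `Γ` (with top element `∞`). -/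
def IsUltrametric (u : Y → Y → Γ) : Prop :=
  (∀ y z, u y z = ⊤ ↔ y = z) ∧
  (∀ x y z, min (u y x) (u x z) ≤ u y z) ∧
  (∀ y z, u y z = u z y)

/-- The closed ball of radius `α` around `y`. -/
def closedBall (u : Y → Y → Γ) (α : Γ) (y : Y) : Set Y := {z | α ≤ u y z}

/-- `B(x,y)`, the smallest closed ball containing `x` and `y`. -/
def smallBall (u : Y → Y → Γ) (x y : Y) : Set Y := closedBall u (u x y) x

/-- A ball: a union of a nonempty collection of closed balls having a common element. -/
def IsBall (u : Y → Y → Γ) (S : Set Y) : Prop :=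
  ∃ C : Set (Γ × Y), C.Nonempty ∧ (∃ y₀, ∀ p ∈ C, y₀ ∈ closedBall u p.1 p.2) ∧
    S = ⋃ p ∈ C, closedBall u p.1 p.2

/-- Spherical completeness: every nest of balls has nonempty intersection. -/
def SphericallyComplete (u : Y → Y → Γ) : Prop :=
  ∀ N : Set (Set Y), N.Nonempty → (∀ B ∈ N, IsBall u B) →
    IsChain (· ⊆ ·) N → (⋂₀ N).Nonempty

/-- `z'` is an attractor for `f`. -/
def IsAttractor (u : Y → Y → Γ) (u' : Y' → Y' → Γ') (f : Y → Y') (z' : Y') : Prop :=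
  ∀ y : Y, f y ≠ z' → ∃ z : Y,
    u' (f y) z' < u' (f z) z' ∧ f '' smallBall u y z ⊆ smallBall u' (f y) z'

/-- A map is immediate if every element of the target is an attractor for it. -/
def Immediate (u : Y → Y → Γ) (u' : Y' → Y' → Γ') (f : Y → Y') : Prop :=
  ∀ z' : Y', IsAttractor u u' f z'

end Ultrametric

namespace IsUltrametric

variable {X Y Γ : Type*} [LinearOrder Γ] [OrderTop Γ] {u : Y → Y → Γ}

theorem self_eq_top (hu : IsUltrametric u) (y : Y) : u y y = ⊤ := (hu.1 y y).2 rfl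

theorem comm (hu : IsUltrametric u) (y z : Y) : u y z = u z y := hu.2.2 y z

theorem min_le (hu : IsUltrametric u) (x y z : Y) : min (u x y) (u y z) ≤ u x z := hu.2.1 y x z

theorem le_of_le_of_le (hu : IsUltrametric u) {γ : Γ} {x y z : Y} (hxy : γ ≤ u x y)
    (hyz : γ ≤ u y z) : γ ≤ u x z :=
  (le_min hxy hyz).trans (hu.min_le x y z)

theorem le_dist_iff_le_dist (hu : IsUltrametric u) {x y z : Y} :
    u z x ≤ u z y ↔ u z x ≤ u x y :=
  ⟨fun h => hu.le_of_le_of_le (hu.comm x z ▸ le_rfl) h,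
    fun h => hu.le_of_le_of_le le_rfl h⟩

theorem comp_injective (hu : IsUltrametric u) {g : X → Y} (hg : Function.Injective g) :
    IsUltrametric fun x y => u (g x) (g y) :=
  ⟨fun _ _ => (hu.1 _ _).trans hg.eq_iff, fun _ _ _ => hu.2.1 _ _ _, fun _ _ => hu.2.2 _ _⟩

theorem closedBall_subset_closedBall (hu : IsUltrametric u) {γ γ' : Γ} {y z : Y}
    (hz : γ ≤ u y z) (hγ : γ ≤ γ') : closedBall u γ' z ⊆ closedBall u γ y :=
  fun _ hw => hu.le_of_le_of_le hz (hγ.trans hw)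

end IsUltrametric

section Balls

variable {Y Γ : Type*} [LinearOrder Γ] {u : Y → Y → Γ}

theorem mem_closedBall {γ : Γ} {y z : Y} : z ∈ closedBall u γ y ↔ γ ≤ u y z := Iff.rfl

variable [OrderTop Γ]

theorem isBall_biUnion_closedBall (hu : IsUltrametric u) {G : Set Γ} (hG : G.Nonempty) (y : Y) :
    IsBall u (⋃ γ ∈ G, closedBall u γ y) := by
  refine ⟨(·, y) '' G, hG.image _, ⟨y, ?_⟩, by rw [Set.biUnion_image]⟩
  rintro _ ⟨γ, -, rfl⟩
  simp [mem_closedBall, hu.self_eq_top]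

theorem isBall_closedBall (hu : IsUltrametric u) (γ : Γ) (y : Y) : IsBall u (closedBall u γ y) := by
  simpa using isBall_biUnion_closedBall hu (Set.singleton_nonempty γ) y

theorem IsBall.exists_eq_biUnion (hu : IsUltrametric u) {S : Set Y} (hS : IsBall u S) :
    ∃ y : Y, ∃ G : Set Γ, G.Nonempty ∧ S = ⋃ γ ∈ G, closedBall u γ y := by
  obtain ⟨C, hC, ⟨y, hy⟩, rfl⟩ := hS
  refine ⟨y, Prod.fst '' C, hC.image _, ?_⟩
  ext z
  simp only [Set.mem_iUnion, Set.mem_image, mem_closedBall, exists_prop]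
  constructor
  · rintro ⟨p, hp, hz⟩
    exact ⟨p.1, ⟨p, hp, rfl⟩, hu.le_of_le_of_le (hu.comm y p.2 ▸ hy p hp) hz⟩
  · rintro ⟨_, ⟨p, hp, rfl⟩, hz⟩
    exact ⟨p, hp, hu.le_of_le_of_le (hy p hp) hz⟩

theorem IsBall.nonempty (hu : IsUltrametric u) {S : Set Y} (hS : IsBall u S) : S.Nonempty := by
  obtain ⟨y, G, ⟨γ, hγ⟩, rfl⟩ := hS.exists_eq_biUnion hu
  exact ⟨y, Set.mem_biUnion hγ (by simp [mem_closedBall, hu.self_eq_top])⟩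

theorem IsBall.mem_of_le (hu : IsUltrametric u) {S : Set Y} (hS : IsBall u S) {y z w : Y}
    (hz : z ∈ S) (hw : w ∈ S) (h : u z w ≤ u z y) : y ∈ S := by
  obtain ⟨c, G, -, rfl⟩ := hS.exists_eq_biUnion hu
  simp only [Set.mem_iUnion₂, mem_closedBall, exists_prop] at hz hw ⊢
  obtain ⟨γ, hγ, hcz⟩ := hz
  obtain ⟨γ', hγ', hcw⟩ := hw
  rcases le_total γ γ' with hle | hle
  · have hzw : γ ≤ u z w := hu.le_of_le_of_le (hu.comm z c ▸ hcz) (hle.trans hcw)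
    exact ⟨γ, hγ, hu.le_of_le_of_le hcz (hzw.trans h)⟩
  · have hwz : γ' ≤ u w z := hu.le_of_le_of_le (hu.comm w c ▸ hcw) (hle.trans hcz)
    have hwy : γ' ≤ u w y := hu.le_of_le_of_le hwz ((hu.comm w z ▸ hwz).trans h)
    exact ⟨γ', hγ', hu.le_of_le_of_le hcw hwy⟩

theorem IsBall.dist_eq_of_notMem (hu : IsUltrametric u) {S : Set Y} (hS : IsBall u S)
    {y z w : Y} (hy : y ∉ S) (hz : z ∈ S) (hw : w ∈ S) : u y z = u y w := by
  have key : ∀ {a b}, a ∈ S → b ∈ S → u y a ≤ u y b := fun ha hb => by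
    have hlt : u _ y < u _ _ := lt_of_not_ge fun h => hy (hS.mem_of_le hu ha hb h)
    exact hu.le_of_le_of_le le_rfl ((hu.comm y _).symm ▸ hlt.le)
  exact le_antisymm (key hz hw) (key hw hz)

end Balls

section Nests

variable {Y Γ : Type*} [LinearOrder Γ] [OrderTop Γ] {u : Y → Y → Γ} {N : Set (Set Y)}

theorem dist_eq_of_notMem_of_isChain (hu : IsUltrametric u) (hN : ∀ B ∈ N, IsBall u B)
    (hc : IsChain (· ⊆ ·) N) {B B' : Set Y} (hB : B ∈ N) (hB' : B' ∈ N) {y z z' : Y}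
    (hyB : y ∉ B) (hyB' : y ∉ B') (hz : z ∈ B) (hz' : z' ∈ B') : u y z = u y z' := by
  rcases hc.total hB hB' with h | h
  · exact (hN B' hB').dist_eq_of_notMem hu hyB' (h hz) hz'
  · exact (hN B hB).dist_eq_of_notMem hu hyB hz (h hz')

theorem mem_of_dist_le_of_isChain (hu : IsUltrametric u) (hN : ∀ B ∈ N, IsBall u B)
    (hc : IsChain (· ⊆ ·) N) {B₀ B : Set Y} (hB₀ : B₀ ∈ N) (hB : B ∈ N) {y z₀ t : Y}
    (hy₀ : y ∉ B₀) (hz₀ : z₀ ∈ B₀) (hy : y ∈ B) (h : u y z₀ ≤ u y t) : t ∈ B := by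
  have hsub : B₀ ⊆ B := (hc.total hB hB₀).resolve_left fun h => hy₀ (h hy)
  exact (hN B hB).mem_of_le hu hy (hsub hz₀) h

theorem dist_le_dist_of_isChain (hu : IsUltrametric u) (hN : ∀ B ∈ N, IsBall u B)
    (hc : IsChain (· ⊆ ·) N) {B₀ B₁ : Set Y} (hB₀ : B₀ ∈ N) (hB₁ : B₁ ∈ N) {y z₀ t z₁ : Y}
    (hy₀ : y ∉ B₀) (hz₀ : z₀ ∈ B₀) (h : u y z₀ ≤ u y t) (ht₁ : t ∉ B₁) (hz₁ : z₁ ∈ B₁) :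
    u y z₀ ≤ u t z₁ := by
  have hy₁ : y ∉ B₁ := fun hy => ht₁ (mem_of_dist_le_of_isChain hu hN hc hB₀ hB₁ hy₀ hz₀ hy h)
  rw [dist_eq_of_notMem_of_isChain hu hN hc hB₀ hB₁ hy₀ hy₁ hz₀ hz₁] at h ⊢
  exact hu.le_of_le_of_le (hu.comm t y ▸ h) le_rfl

end Nests

section Transfer

variable {Y Y' Γ : Type*} [LinearOrder Γ] [OrderTop Γ] {u : Y → Y → Γ} {u' : Y' → Y' → Γ}

theorem SphericallyComplete.of_approx [Nonempty Y] (hu : IsUltrametric u)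
    (hu' : IsUltrametric u') (hY : SphericallyComplete u) {f : Y → Y'}
    (hf : ∀ a c, u a c ≤ u' (f a) (f c))
    (happrox : ∀ a z, f a ≠ z → ∃ b, u' (f a) z ≤ u a b ∧ u' (f a) z < u' (f b) z) :
    SphericallyComplete u' := by
  intro N _ hN hc
  by_contra hempty
  have hmiss : ∀ y, ∃ B ∈ N, y ∉ B ∧ ∃ z, z ∈ B := fun y => by
    obtain ⟨B, hB, hyB⟩ : ∃ B ∈ N, y ∉ B := by
      by_contra! h
      exact hempty ⟨y, h⟩
    exact ⟨B, hB, hyB, (hN B hB).nonempty hu'⟩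
  choose B₀ hB₀ hyB₀ z₀ hz₀ using hmiss
  -- the distance from `f a` to every ball of the nest that misses it
  let δ : Y → Γ := fun a => u' (f a) (z₀ (f a))
  let r : Y → Y → Prop := fun a b =>
    closedBall u (δ b) b ⊆ closedBall u (δ a) a ∧ ∀ B ∈ N, f a ∈ B → f b ∈ B
  have hr : ∀ a b, δ a ≤ u a b → r a b := fun a b hab => by
    have hfab : δ a ≤ u' (f a) (f b) := hab.trans (hf a b)
    exact ⟨hu.closedBall_subset_closedBall hab (dist_le_dist_of_isChain hu' hN hc (hB₀ _)
        (hB₀ _) (hyB₀ _) (hz₀ _) hfab (hyB₀ (f b)) (hz₀ _)),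
      fun B hB hfa => mem_of_dist_le_of_isChain hu' hN hc (hB₀ _) hB (hyB₀ _) (hz₀ _) hfa hfab⟩
  obtain ⟨m, hm⟩ := exists_maximal_of_nonempty_chains_bounded (r := r)
    (fun C hC ⟨a₀, ha₀⟩ => by
      obtain ⟨t, ht⟩ := hY ((fun a => closedBall u (δ a) a) '' C) ⟨_, a₀, ha₀, rfl⟩
        (by rintro _ ⟨a, -, rfl⟩; exact isBall_closedBall hu _ _)
        (hC.image_of_map_rel r (flip fun A B : Set Y => A ⊆ B) (fun a => closedBall u (δ a) a)
          fun _ _ h => h.1).symm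
      exact ⟨t, fun a ha => hr a t (ht _ ⟨a, ha, rfl⟩)⟩)
    fun hab hbc => ⟨hbc.1.trans hab.1, fun B hB h => hbc.2 B hB (hab.2 B hB h)⟩
  obtain ⟨b, hmb, hbz⟩ := happrox m (z₀ (f m)) fun h => hyB₀ _ (h ▸ hz₀ _)
  have hbm := hm b (hr m b hmb)
  have hb : f b ∉ B₀ (f m) := fun h => hyB₀ _ (hbm.2 _ (hB₀ _) h)
  have hδb : δ b = u' (f b) (z₀ (f m)) :=
    dist_eq_of_notMem_of_isChain hu' hN hc (hB₀ _) (hB₀ _) (hyB₀ _) hb (hz₀ _) (hz₀ _)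
  have hbm' : δ b ≤ u' (f b) (f m) :=
    (hbm.1 (by simp [mem_closedBall, hu.self_eq_top])).trans (hf b m)
  -- by maximality `m` lies in the ball of radius `δ b` around `b`, which forces `δ b ≤ δ m`
  exact (hbz.trans_eq hδb.symm).not_ge
    (hu'.le_of_le_of_le (hu'.comm (f m) (f b) ▸ hbm') hδb.le)

theorem IsUltrametric.exists_forall_dist_le {u : Y → Y → Γ} (hu : IsUltrametric u)
    {s : Set Y} (hs : s.Nonempty) (hsc : SphericallyComplete fun x y : s => u x y) (z : Y) :
    ∃ x ∈ s, ∀ y ∈ s, u z y ≤ u z x := by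
  have hus : IsUltrametric fun x y : s => u x y := hu.comp_injective Subtype.val_injective
  let ball : s → Set s := fun y₀ => {y | u z y₀ ≤ u z y}
  have hball : ∀ y₀, ball y₀ = closedBall (fun x y : s => u x y) (u z y₀) y₀ := fun y₀ =>
    Set.ext fun _ => hu.le_dist_iff_le_dist
  obtain ⟨x, hx⟩ := hsc (Set.range ball) (Set.range_nonempty_iff_nonempty.2 hs.to_subtype)
    (by rintro _ ⟨y₀, rfl⟩; exact hball y₀ ▸ isBall_closedBall hus _ _)
    (by
      rintro _ ⟨y₀, rfl⟩ _ ⟨y₁, rfl⟩ -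
      rcases le_total (u z y₀) (u z y₁) with h | h
      exacts [Or.inr fun _ hy => h.trans hy, Or.inl fun _ hy => h.trans hy])
  exact ⟨x, x.2, fun y hy => hx _ ⟨⟨y, hy⟩, rfl⟩⟩

end Transfer

section Pi

variable {ι Γ : Type*} [Fintype ι] {X : ι → Type*} [LinearOrder Γ] [OrderTop Γ]
  {u : ∀ i, X i → X i → Γ}

def piDist (u : ∀ i, X i → X i → Γ) (a b : ∀ i, X i) : Γ :=
  Finset.univ.inf fun i => u i (a i) (b i)

theorem le_piDist_iff {γ : Γ} {a b : ∀ i, X i} : γ ≤ piDist u a b ↔ ∀ i, γ ≤ u i (a i) (b i) := by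
  simp [piDist]

theorem IsUltrametric.pi (hu : ∀ i, IsUltrametric (u i)) : IsUltrametric (piDist u) := by
  refine ⟨fun a b => ?_, fun x y z => ?_, fun a b => ?_⟩
  · rw [← top_le_iff, le_piDist_iff, funext_iff]
    simp only [top_le_iff, (hu _).1]
  · exact le_piDist_iff.2 fun i => (hu i).le_of_le_of_le
      (le_piDist_iff.1 (min_le_left _ _) i) (le_piDist_iff.1 (min_le_right _ _) i)
  · exact Finset.inf_congr rfl fun i _ => (hu i).comm _ _

theorem image_eval_biUnion_closedBall (hu : ∀ i, IsUltrametric (u i)) (G : Set Γ) (y : ∀ i, X i)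
    (i : ι) : Function.eval i '' (⋃ γ ∈ G, closedBall (piDist u) γ y) =
      ⋃ γ ∈ G, closedBall (u i) γ (y i) := by
  classical
  ext x
  simp only [Set.mem_image, Set.mem_iUnion₂, mem_closedBall, exists_prop, le_piDist_iff]
  constructor
  · rintro ⟨z, ⟨γ, hγ, hz⟩, rfl⟩
    exact ⟨γ, hγ, hz i⟩
  · rintro ⟨γ, hγ, hx⟩
    refine ⟨Function.update y i x, ⟨γ, hγ, fun j => ?_⟩, Function.update_self ..⟩
    rcases eq_or_ne j i with rfl | hj
    · simpa using hx
    · simp [Function.update_of_ne hj, (hu j).self_eq_top]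

theorem IsBall.image_eval (hu : ∀ i, IsUltrametric (u i)) {B : Set (∀ i, X i)}
    (hB : IsBall (piDist u) B) (i : ι) : IsBall (u i) (Function.eval i '' B) := by
  obtain ⟨y, G, hG, rfl⟩ := hB.exists_eq_biUnion (IsUltrametric.pi hu)
  rw [image_eval_biUnion_closedBall hu]
  exact isBall_biUnion_closedBall (hu i) hG (y i)

-- `ι` is finite, so the radii a point attains in the coordinates have a minimum.
theorem IsBall.eq_pi (hu : ∀ i, IsUltrametric (u i)) {B : Set (∀ i, X i)}
    (hB : IsBall (piDist u) B) : B = Set.univ.pi fun i => Function.eval i '' B := by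
  refine (Set.subset_pi_eval_image _ _).antisymm fun t ht => ?_
  obtain ⟨y, G, ⟨γ₀, hγ₀⟩, rfl⟩ := hB.exists_eq_biUnion (IsUltrametric.pi hu)
  simp only [Set.mem_univ_pi, image_eval_biUnion_closedBall hu, Set.mem_iUnion₂, mem_closedBall,
    exists_prop] at ht ⊢
  choose γ hγ hγt using ht
  rcases isEmpty_or_nonempty ι with hι | hι
  · exact ⟨γ₀, hγ₀, le_piDist_iff.2 hι.elim⟩
  obtain ⟨i₀, -, hi₀⟩ := Finset.univ.exists_min_image γ Finset.univ_nonempty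
  exact ⟨γ i₀, hγ i₀, le_piDist_iff.2 fun i => (hi₀ i (Finset.mem_univ i)).trans (hγt i)⟩

theorem SphericallyComplete.pi (hu : ∀ i, IsUltrametric (u i))
    (hsc : ∀ i, SphericallyComplete (u i)) : SphericallyComplete (piDist u) := by
  intro N hNne hN hc
  have hproj : ∀ i, ∃ t, ∀ B ∈ N, t ∈ Function.eval i '' B := fun i => by
    obtain ⟨t, ht⟩ := hsc i ((Function.eval i '' ·) '' N) (hNne.image _)
      (by rintro _ ⟨B, hB, rfl⟩; exact (hN B hB).image_eval hu i)
      (hc.image_of_map_rel _ _ (Function.eval i '' ·) fun _ _ => Set.image_mono)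
    exact ⟨t, fun B hB => ht _ ⟨B, hB, rfl⟩⟩
  choose t ht using hproj
  exact ⟨t, fun B hB => (hN B hB).eq_pi hu ▸ Set.mem_univ_pi.2 fun i => ht i B hB⟩

end Pi

section Valuation

variable {A Γ : Type*} [AddCommGroup A] [LinearOrder Γ] {v : A → Γ}

theorem val_neg (hv2 : ∀ a b : A, min (v a) (v b) ≤ v (a - b)) (a : A) : v (-a) = v a := by
  have hle : ∀ a : A, v a ≤ v (-a) := fun a => by
    have h0 : v a ≤ v 0 := by simpa using hv2 a a
    simpa [min_eq_right h0] using hv2 0 a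
  exact le_antisymm (by simpa using hle (-a)) (hle a)

theorem val_sub_comm (hv2 : ∀ a b : A, min (v a) (v b) ≤ v (a - b)) (a b : A) :
    v (a - b) = v (b - a) := by
  rw [← val_neg hv2, neg_sub]

theorem min_le_val_add (hv2 : ∀ a b : A, min (v a) (v b) ≤ v (a - b)) (a b : A) :
    min (v a) (v b) ≤ v (a + b) := by
  simpa [val_neg hv2] using hv2 a (-b)

theorem inf_le_val_sum [OrderTop Γ] (h0 : v 0 = ⊤) (hv2 : ∀ a b : A, min (v a) (v b) ≤ v (a - b))
    {ι : Type*} (s : Finset ι) (g : ι → A) : (s.inf fun i => v (g i)) ≤ v (∑ i ∈ s, g i) := by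
  classical
  induction s using Finset.induction with
  | empty => simp [h0]
  | insert i s hi ih =>
    rw [Finset.sum_insert hi, Finset.inf_insert]
    exact (min_le_min le_rfl ih).trans (min_le_val_add hv2 _ _)

theorem isUltrametric_val_sub [OrderTop Γ] (hv0 : ∀ a : A, v a = ⊤ ↔ a = 0)
    (hv2 : ∀ a b : A, min (v a) (v b) ≤ v (a - b)) : IsUltrametric fun a b : A => v (a - b) :=
  ⟨fun a b => (hv0 _).trans sub_eq_zero,
    fun x y z => by
      simpa only [sub_sub_sub_cancel_right, val_sub_comm hv2 z x] using hv2 (y - x) (z - x),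
    fun a b => val_sub_comm hv2 a b⟩

end Valuation

section Stmt19

variable {A : Type*} [AddCommGroup A] {Γ : Type*} [LinearOrder Γ] [OrderTop Γ]

/-- The sum `A₁ + … + A_n` of subgroups, as a set. -/
def sumSet {n : ℕ} (Asub : Fin n → AddSubgroup A) : Set A :=
  {x | ∃ a : Fin n → A, (∀ i, a i ∈ Asub i) ∧ x = ∑ i, a i}

/-- The sum `A₁ + … + A_n` is pseudo-direct. -/
def PseudoDirect {n : ℕ} (v : A → Γ) (Asub : Fin n → AddSubgroup A) : Prop :=
  ∀ x ∈ sumSet Asub, x ≠ 0 → ∃ a : Fin n → A, (∀ i, a i ∈ Asub i) ∧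
    v (∑ i, a i) = (Finset.univ.inf fun i => v (a i)) ∧ v x < v (x - ∑ i, a i)

/-- The addition homomorphism `A₁ × … × A_n → A₁ + … + A_n` (product with the
minimum valuation) is immediate, expressed via (IH1) and (IH2). -/
def ImmediateSum {n : ℕ} (v : A → Γ) (Asub : Fin n → AddSubgroup A) : Prop :=
  ∀ x ∈ sumSet Asub, x ≠ 0 → ∃ a : (∀ i, Asub i),
    v x < v (x - ∑ i, (a i : A)) ∧
    ∀ b : (∀ i, Asub i),
      (Finset.univ.inf fun i => v (a i : A)) ≤ (Finset.univ.inf fun i => v (b i : A)) →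
        v (∑ i, (a i : A)) ≤ v (∑ i, (b i : A))

section SumOfSubgroups

variable {n : ℕ} {Asub : Fin n → AddSubgroup A} {v : A → Γ}

theorem zero_mem_sumSet : (0 : A) ∈ sumSet Asub :=
  ⟨0, fun i => (Asub i).zero_mem, by simp⟩

theorem sub_mem_sumSet {x y : A} (hx : x ∈ sumSet Asub) (hy : y ∈ sumSet Asub) :
    x - y ∈ sumSet Asub := by
  obtain ⟨a, ha, rfl⟩ := hx
  obtain ⟨b, hb, rfl⟩ := hy
  exact ⟨a - b, fun i => sub_mem (ha i) (hb i), by simp [Finset.sum_sub_distrib]⟩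

def sumMap (Asub : Fin n → AddSubgroup A) (a : ∀ i, Asub i) : sumSet Asub :=
  ⟨∑ i, (a i : A), fun i => a i, fun i => (a i).2, rfl⟩

theorem piDist_le_val_sub_sumMap (h0 : v 0 = ⊤) (hv2 : ∀ a b : A, min (v a) (v b) ≤ v (a - b))
    (a c : ∀ i, Asub i) :
    piDist (fun i (x y : Asub i) => v ((x : A) - y)) a c ≤ v (sumMap Asub a - sumMap Asub c) := by
  simpa [piDist, sumMap, ← Finset.sum_sub_distrib] using inf_le_val_sum h0 hv2 Finset.univ _

theorem PseudoDirect.exists_approx (hv2 : ∀ a b : A, min (v a) (v b) ≤ v (a - b))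
    (hPD : PseudoDirect v Asub) (a : ∀ i, Asub i) (z : sumSet Asub) (hne : sumMap Asub a ≠ z) :
    ∃ b, v (sumMap Asub a - z) ≤ piDist (fun i (x y : Asub i) => v ((x : A) - y)) a b ∧
      v (sumMap Asub a - z) < v (sumMap Asub b - z) := by
  have hx0 : (z - sumMap Asub a : A) ≠ 0 := sub_ne_zero.2 fun h => hne (Subtype.ext h.symm)
  obtain ⟨d, hd, hdinf, hlt⟩ := hPD _ (sub_mem_sumSet z.2 (sumMap Asub a).2) hx0
  have hdist : piDist (fun i (x y : Asub i) => v ((x : A) - y)) a (fun i => a i + ⟨d i, hd i⟩) =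
      v (∑ i, d i) := by
    simp [piDist, hdinf, val_neg hv2]
  refine ⟨fun i => a i + ⟨d i, hd i⟩, ?_, ?_⟩
  · rw [val_sub_comm hv2, hdist]
    simpa only [sub_sub_cancel, min_eq_left hlt.le] using
      hv2 (z - sumMap Asub a) (z - sumMap Asub a - ∑ i, d i)
  · rw [val_sub_comm hv2 (sumMap Asub a : A), val_sub_comm hv2 (sumMap Asub _ : A)]
    convert hlt using 2
    simp only [sumMap, AddSubgroup.coe_add, Finset.sum_add_distrib]
    abel

theorem PseudoDirect.sphericallyComplete (hv0 : ∀ a : A, v a = ⊤ ↔ a = 0)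
    (hv2 : ∀ a b : A, min (v a) (v b) ≤ v (a - b))
    (hsc : ∀ i, SphericallyComplete (fun x y : Asub i => v ((x : A) - (y : A))))
    (hPD : PseudoDirect v Asub) :
    SphericallyComplete (fun x y : sumSet Asub => v ((x : A) - (y : A))) :=
  have hu := isUltrametric_val_sub hv0 hv2
  SphericallyComplete.of_approx (IsUltrametric.pi fun _ => hu.comp_injective Subtype.val_injective)
    (hu.comp_injective Subtype.val_injective)
    (SphericallyComplete.pi (fun _ => hu.comp_injective Subtype.val_injective) hsc)
    (piDist_le_val_sub_sumMap ((hv0 0).2 rfl) hv2) (hPD.exists_approx hv2)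

theorem PseudoDirect.immediateSum (h0 : v 0 = ⊤) (hv2 : ∀ a b : A, min (v a) (v b) ≤ v (a - b))
    (hPD : PseudoDirect v Asub) : ImmediateSum v Asub := by
  intro x hx hx0
  obtain ⟨a, ha, hinf, hlt⟩ := hPD x hx hx0
  exact ⟨fun i => ⟨a i, ha i⟩, hlt, fun b hb =>
    hinf.trans_le (hb.trans (inf_le_val_sum h0 hv2 _ _))⟩

theorem ImmediateSum.pseudoDirect (h0 : v 0 = ⊤) (hv2 : ∀ a b : A, min (v a) (v b) ≤ v (a - b))
    (hIm : ImmediateSum v Asub) : PseudoDirect v Asub := by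
  intro x hx hx0
  obtain ⟨a, hlt, hopt⟩ := hIm x hx hx0
  have : Nonempty (Fin n) := by
    by_contra h
    obtain ⟨c, -, rfl⟩ := hx
    simp [not_nonempty_iff.1 h] at hx0
  obtain ⟨j, -, hj⟩ := Finset.univ.exists_mem_eq_inf Finset.univ_nonempty fun i => v (a i : A)
  -- compare `a` with the vector keeping only a coordinate of least valuation
  have hcoe : ∀ i, ((Pi.single j (a j) : ∀ i, Asub i) i : A) =
      (Pi.single j (a j : A) : Fin n → A) i := by
    intro i
    rcases eq_or_ne i j with rfl | h
    · simp
    · simp [h]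
  have hsum : ∑ i, ((Pi.single j (a j) : ∀ i, Asub i) i : A) = a j := by
    simp [hcoe]
  have hinf : (Finset.univ.inf fun i => v ((Pi.single j (a j) : ∀ i, Asub i) i : A)) = v (a j) := by
    refine le_antisymm (Finset.inf_le_of_le (Finset.mem_univ j) (by simp))
      (Finset.le_inf fun i _ => ?_)
    rcases eq_or_ne i j with rfl | h
    · simp
    · simp [h, h0]
  refine ⟨fun i => a i, fun i => (a i).2, le_antisymm ?_ (inf_le_val_sum h0 hv2 _ _), hlt⟩
  simpa [hsum, hj] using hopt (Pi.single j (a j)) (by rw [hinf, hj])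

end SumOfSubgroups

/-- a pseudo-direct sum of spherically complete subgroups of a valued
abelian group is spherically complete and has the optimal approximation property;
moreover the sum is pseudo-direct iff the addition homomorphism is immediate. -/
theorem pseudoDirect_sum_sphericallyComplete
    (v : A → Γ)
    (hv0 : ∀ a : A, v a = ⊤ ↔ a = 0)
    (hv2 : ∀ a b : A, min (v a) (v b) ≤ v (a - b))
    {n : ℕ} (Asub : Fin n → AddSubgroup A)
    (hsc : ∀ i, SphericallyComplete (fun x y : Asub i => v ((x : A) - (y : A)))) :
    (PseudoDirect v Asub →
      SphericallyComplete (fun x y : sumSet Asub => v ((x : A) - (y : A))) ∧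
      ∀ z' : A, ∃ x ∈ sumSet Asub, ∀ y ∈ sumSet Asub, v (z' - y) ≤ v (z' - x)) ∧
    (PseudoDirect v Asub ↔ ImmediateSum v Asub) := by
  have h0 : v 0 = ⊤ := (hv0 0).2 rfl
  refine ⟨fun hPD => ?_, ⟨PseudoDirect.immediateSum h0 hv2, ImmediateSum.pseudoDirect h0 hv2⟩⟩
  have hS := hPD.sphericallyComplete hv0 hv2 hsc
  exact ⟨hS, (isUltrametric_val_sub hv0 hv2).exists_forall_dist_le ⟨0, zero_mem_sumSet⟩ hS⟩

end Stmt19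
end
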